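/- Let G be an α_i-metric graph with n > 1 vertices, let u be a vertex of G, and let v_1, ..., v_n be an ordering of the vertices of G with v_n = u such that d(u,v_k) ≥ d(u,v_l) whenever k ≤ l. Then for every positive integer r, this ordering is an (r, ⌈r/2⌉ + 2i + 1)*-dismantling ordering of G: for every k with 1 ≤ k < n there exists ℓ with k < ℓ ≤ n such that for every x ∈ {v_k, v_{k+1}, ..., v_n}, d(x,v_k) ≤ r implies d(x,v_ℓ) ≤ ⌈r/2⌉ + 2i + 1. -/

import Mathlib

def alphaMetric {V : Type*} (G : SimpleGraph V) (i : ℕ) : Prop :=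
  ∀ u v w x : V,
    G.dist u v + G.dist v w = G.dist u w →
    G.dist v w + G.dist w x = G.dist v x →
    G.Adj v w →
    G.dist u v + G.dist v x ≤ G.dist u x + i

namespace StmtAux
variable {V : Type*} (G : SimpleGraph V)

lemma adj_dist_one {x y : V} (h : G.Adj x y) : G.dist x y = 1 :=
  SimpleGraph.dist_eq_one_iff_adj.mpr h

lemma dist_getVert_le (hconn : G.Connected) {a b : V} (p : G.Walk a b) :
    ∀ m : ℕ, G.dist a (p.getVert m) ≤ m := by
  intro m
  induction m with
  | zero => simp
  | succ m ih =>
    by_cases hm : m < p.length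
    · have hadj : G.Adj (p.getVert m) (p.getVert (m + 1)) := p.adj_getVert_succ hm
      have h1 : G.dist a (p.getVert (m + 1)) ≤
          G.dist a (p.getVert m) + G.dist (p.getVert m) (p.getVert (m + 1)) :=
        hconn.dist_triangle
      have h2 : G.dist (p.getVert m) (p.getVert (m + 1)) = 1 := adj_dist_one G hadj
      omega
    · have h1 : p.getVert (m + 1) = b := p.getVert_of_length_le (by omega)
      have h2 : p.getVert m = b := p.getVert_of_length_le (by omega)
      rw [h1, ← h2]
      omega

lemma interval_point (hconn : G.Connected) (a u : V) (m : ℕ) (hm : m ≤ G.dist a u) :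
    ∃ w : V, G.dist a w = m ∧ m + G.dist w u = G.dist a u := by
  obtain ⟨p, hp⟩ := hconn.exists_walk_length_eq_dist a u
  refine ⟨p.getVert m, ?_, ?_⟩
  all_goals {
    have h1 : G.dist a (p.getVert m) ≤ m := dist_getVert_le G hconn p m
    have h2 : G.dist u (p.reverse.getVert (p.length - m)) ≤ p.length - m :=
      dist_getVert_le G hconn p.reverse (p.length - m)
    rw [SimpleGraph.Walk.getVert_reverse, Nat.sub_sub_self (by omega)] at h2
    have h3 : G.dist a u ≤ G.dist a (p.getVert m) + G.dist (p.getVert m) u :=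
      hconn.dist_triangle
    have h4 : G.dist u (p.getVert m) = G.dist (p.getVert m) u := SimpleGraph.dist_comm
    omega
  }

lemma step_toward (hconn : G.Connected) {a z : V} (h : 0 < G.dist a z) :
    ∃ y : V, G.Adj y z ∧ G.dist a y + 1 = G.dist a z := by
  have hza : G.dist z a = G.dist a z := SimpleGraph.dist_comm
  obtain ⟨p, hp⟩ := hconn.exists_walk_length_eq_dist z a
  cases p with
  | nil => simp at hp; simp [SimpleGraph.dist_self] at h
  | @cons _ y _ hadj q =>
    refine ⟨y, hadj.symm, ?_⟩
    have h1 : G.dist y a ≤ q.length := SimpleGraph.dist_le q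
    have h2 : G.dist a z ≤ G.dist a y + G.dist y z := hconn.dist_triangle
    have h3 : G.dist y z = 1 := adj_dist_one G hadj.symm
    have h4 : G.dist a y = G.dist y a := SimpleGraph.dist_comm
    simp only [SimpleGraph.Walk.length_cons] at hp
    omega

/-- Two vertices of `I(a,u)` at the same distance `σ` from `a` are at
distance at most `i+1` from each other, in an `α_i`-metric graph. -/
lemma slice (hconn : G.Connected) (i : ℕ) (halpha : alphaMetric G i) (a u : V) :
    ∀ σ : ℕ, ∀ y z : V, G.dist a y = σ → G.dist a z = σ →
      σ + G.dist y u = G.dist a u → σ + G.dist z u = G.dist a u →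
      G.dist y z ≤ i + 1 := by
  intro σ
  induction σ with
  | zero =>
    intro y z hy hz _ _
    have h1 : a = y := (hconn.dist_eq_zero_iff).mp hy
    have h2 : a = z := (hconn.dist_eq_zero_iff).mp hz
    subst h1; subst h2
    simp [SimpleGraph.dist_self]
  | succ σ IH =>
    intro y z hy hz hyu hzu
    by_cases ht0 : G.dist y z = 0
    · omega
    set t := G.dist y z with htdef
    -- a1 : neighbor of z toward a
    obtain ⟨a1, ha1adj, ha1⟩ := step_toward G hconn (a := a) (z := z) (by omega)
    have ha1z : G.dist a1 z = 1 := adj_dist_one G ha1adj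
    have ha1u : σ + G.dist a1 u = G.dist a u := by
      have t1 : G.dist a u ≤ G.dist a a1 + G.dist a1 u := hconn.dist_triangle
      have t2 : G.dist a1 u ≤ G.dist a1 z + G.dist z u := hconn.dist_triangle
      omega
    have hza1 : G.dist z a1 = G.dist a1 z := SimpleGraph.dist_comm
    have hzy : G.dist z y = G.dist y z := SimpleGraph.dist_comm
    have hxi1 : G.dist a1 y ≤ G.dist a1 z + G.dist z y := hconn.dist_triangle
    have hxi2 : G.dist y z ≤ G.dist y a1 + G.dist a1 z := hconn.dist_triangle
    have hya1 : G.dist y a1 = G.dist a1 y := SimpleGraph.dist_comm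
    rcases (by omega : G.dist a1 y + 1 = t ∨ G.dist a1 y = t + 1 ∨ G.dist a1 y = t)
      with hc | hc | hc
    · -- quadruple (u, z, a1, y)
      have h1 : G.dist u z + G.dist z a1 = G.dist u a1 := by
        have e1 : G.dist u z = G.dist z u := SimpleGraph.dist_comm
        have e2 : G.dist u a1 = G.dist a1 u := SimpleGraph.dist_comm
        omega
      have h2 : G.dist z a1 + G.dist a1 y = G.dist z y := by omega
      have := halpha u z a1 y h1 h2 ha1adj.symm
      have e1 : G.dist u z = G.dist z u := SimpleGraph.dist_comm
      have e2 : G.dist u y = G.dist y u := SimpleGraph.dist_comm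
      omega
    · -- quadruple (a, a1, z, y)
      have h1 : G.dist a a1 + G.dist a1 z = G.dist a z := by omega
      have h2 : G.dist a1 z + G.dist z y = G.dist a1 y := by omega
      have := halpha a a1 z y h1 h2 ha1adj
      omega
    · -- flat: pair (y, a1); a2 : neighbor of y toward a
      obtain ⟨a2, ha2adj, ha2⟩ := step_toward G hconn (a := a) (z := y) (by omega)
      have ha2y : G.dist a2 y = 1 := adj_dist_one G ha2adj
      have ha2u : σ + G.dist a2 u = G.dist a u := by
        have t1 : G.dist a u ≤ G.dist a a2 + G.dist a2 u := hconn.dist_triangle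
        have t2 : G.dist a2 u ≤ G.dist a2 y + G.dist y u := hconn.dist_triangle
        omega
      have hz1 : G.dist a2 a1 ≤ G.dist a2 y + G.dist y a1 := hconn.dist_triangle
      have hz2 : G.dist a1 y ≤ G.dist a1 a2 + G.dist a2 y := hconn.dist_triangle
      have hz3 : G.dist a1 a2 = G.dist a2 a1 := SimpleGraph.dist_comm
      rcases (by omega : G.dist a2 a1 + 1 = t ∨ G.dist a2 a1 = t + 1 ∨ G.dist a2 a1 = t)
        with hd | hd | hd
      · -- quadruple (u, y, a2, a1)
        have h1 : G.dist u y + G.dist y a2 = G.dist u a2 := by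
          have e1 : G.dist u y = G.dist y u := SimpleGraph.dist_comm
          have e2 : G.dist u a2 = G.dist a2 u := SimpleGraph.dist_comm
          have e3 : G.dist y a2 = G.dist a2 y := SimpleGraph.dist_comm
          omega
        have h2 : G.dist y a2 + G.dist a2 a1 = G.dist y a1 := by
          have e3 : G.dist y a2 = G.dist a2 y := SimpleGraph.dist_comm
          omega
        have := halpha u y a2 a1 h1 h2 ha2adj.symm
        have e1 : G.dist u y = G.dist y u := SimpleGraph.dist_comm
        have e2 : G.dist u a1 = G.dist a1 u := SimpleGraph.dist_comm
        omega
      · -- quadruple (a, a2, y, a1)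
        have h1 : G.dist a a2 + G.dist a2 y = G.dist a y := by omega
        have h2 : G.dist a2 y + G.dist y a1 = G.dist a2 a1 := by omega
        have := halpha a a2 y a1 h1 h2 ha2adj
        omega
      · -- slice at σ : pair (a1, a2)
        have := IH a1 a2 (by omega) (by omega) (by omega) (by omega)
        omega

/-- Walk from `c` (at position `σ` on `I(a,u)`) toward `x` along same-position
vertices, until reaching `x` or a vertex with an exit neighbor. -/
lemma chain (hconn : G.Connected) (a u : V) (σ : ℕ) :
    ∀ τ : ℕ, ∀ c x : V, G.dist a c = σ → σ + G.dist c u = G.dist a u →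
      G.dist c x = τ →
      ∃ c' : V, G.dist a c' = σ ∧ σ + G.dist c' u = G.dist a u ∧
        G.dist c c' + G.dist c' x = G.dist c x ∧
        (G.dist c' x = 0 ∨ ∃ y : V, G.Adj c' y ∧ G.dist y x + 1 = G.dist c' x ∧
          (G.dist a y = σ + 1 ∨ G.dist y u = G.dist c' u + 1)) := by
  intro τ
  induction τ with
  | zero =>
    intro c x hca hcu hcx
    exact ⟨c, hca, hcu, by simp [SimpleGraph.dist_self], Or.inl hcx⟩
  | succ τ IH =>
    intro c x hca hcu hcx
    have hxc : G.dist x c = G.dist c x := SimpleGraph.dist_comm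
    obtain ⟨y, hyadj, hy⟩ := step_toward G hconn (a := x) (z := c) (by omega)
    have hxy : G.dist x y = G.dist y x := SimpleGraph.dist_comm
    have hcy : G.dist c y = 1 := adj_dist_one G hyadj.symm
    by_cases h1 : G.dist a y = σ + 1
    · exact ⟨c, hca, hcu, by simp [SimpleGraph.dist_self],
        Or.inr ⟨y, hyadj.symm, by omega, Or.inl h1⟩⟩
    by_cases h2 : G.dist y u = G.dist c u + 1
    · exact ⟨c, hca, hcu, by simp [SimpleGraph.dist_self],
        Or.inr ⟨y, hyadj.symm, by omega, Or.inr h2⟩⟩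
    -- y stays at position σ
    have hay_le : G.dist a y ≤ G.dist a c + G.dist c y := hconn.dist_triangle
    have hyu_le : G.dist y u ≤ G.dist y c + G.dist c u := hconn.dist_triangle
    have hyc : G.dist y c = G.dist c y := SimpleGraph.dist_comm
    have hsum : G.dist a u ≤ G.dist a y + G.dist y u := hconn.dist_triangle
    have hya : G.dist a y = σ := by omega
    have hyu : σ + G.dist y u = G.dist a u := by omega
    obtain ⟨c', hc'a, hc'u, hc'split, hc'end⟩ := IH y x hya hyu (by omega)
    refine ⟨c', hc'a, hc'u, ?_, hc'end⟩
    have e2 : G.dist c c' ≤ G.dist c y + G.dist y c' := hconn.dist_triangle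
    have e3 : G.dist c x ≤ G.dist c c' + G.dist c' x := hconn.dist_triangle
    have e4 : G.dist c c' + G.dist c' x ≤ G.dist c x := by omega
    omega

/-- Key lemma: projection onto a geodesic in an `α_i`-metric graph. -/
lemma key (hconn : G.Connected) (i : ℕ) (halpha : alphaMetric G i) (a u : V)
    (σ : ℕ) (w x : V) (hw : G.dist a w = σ) (hwu : σ + G.dist w u = G.dist a u) :
    G.dist w x + σ ≤ G.dist a x + (2 * i + 1) ∨
      G.dist w x + G.dist w u ≤ G.dist u x + (2 * i + 1) := by
  obtain ⟨c', hc'a, hc'u, hsplit, hend⟩ :=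
    chain G hconn a u σ (G.dist w x) w x hw hwu rfl
  have hslice : G.dist w c' ≤ i + 1 :=
    slice G hconn i halpha a u σ w c' hw hc'a hwu hc'u
  rcases hend with h0 | ⟨y, hyadj, hyx, hcase⟩
  · left
    have hx : c' = x := (hconn.dist_eq_zero_iff).mp h0
    subst hx
    omega
  · have hc'y : G.dist c' y = 1 := adj_dist_one G hyadj
    rcases hcase with hay | hyu
    · -- quadruple (a, c', y, x)
      left
      have h1 : G.dist a c' + G.dist c' y = G.dist a y := by omega
      have h2 : G.dist c' y + G.dist y x = G.dist c' x := by omega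
      have := halpha a c' y x h1 h2 hyadj
      omega
    · -- quadruple (u, c', y, x)
      right
      have e1 : G.dist u c' = G.dist c' u := SimpleGraph.dist_comm
      have e2 : G.dist u y = G.dist y u := SimpleGraph.dist_comm
      have h1 : G.dist u c' + G.dist c' y = G.dist u y := by omega
      have h2 : G.dist c' y + G.dist y x = G.dist c' x := by omega
      have := halpha u c' y x h1 h2 hyadj
      omega

end StmtAux

/-- Any ordering `v_0, …, v_{n-1}` of the vertices of an `α_i`-metric graph `G`
(`n > 1`), ending at `u = v_{n-1}` and such that the distance to `u` is
non-increasing along the ordering (e.g. any BFS ordering from `u`, reversed so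
that `u` comes last), is an `(r, ⌈r/2⌉ + 2i + 1)*`-dismantling ordering of `G`
for every `r > 0`: for every index `k` that is not the last one, there is an
index `ℓ > k` such that every later vertex `x = v_m` (with `m ≥ k`) at distance
at most `r` from `v_k` is at distance at most `⌈r/2⌉ + 2i + 1` from `v_ℓ`.
Here `⌈r/2⌉ = (r+1)/2` (natural division). -/
theorem stmt5 {V : Type*} [Fintype V] (G : SimpleGraph V) (hconn : G.Connected)
    (i : ℕ) (halpha : alphaMetric G i)
    (hn : 1 < Fintype.card V) (u : V)
    (v : Fin (Fintype.card V) ≃ V)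
    (hu : v ⟨Fintype.card V - 1, Nat.sub_lt (by omega) one_pos⟩ = u)
    (hmono : ∀ k l : Fin (Fintype.card V), k ≤ l → G.dist u (v l) ≤ G.dist u (v k))
    (r : ℕ) (hr : 0 < r) :
    ∀ k : Fin (Fintype.card V), (k : ℕ) + 1 < Fintype.card V →
      ∃ l : Fin (Fintype.card V), k < l ∧
        ∀ m : Fin (Fintype.card V), k ≤ m →
          G.dist (v m) (v k) ≤ r → G.dist (v m) (v l) ≤ (r + 1) / 2 + 2 * i + 1 := by
  intro k hk
  have hklast : k < (⟨Fintype.card V - 1, Nat.sub_lt (by omega) one_pos⟩ :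
      Fin (Fintype.card V)) := by
    rw [Fin.lt_def]
    show (k : ℕ) < Fintype.card V - 1
    omega
  have hku : v k ≠ u := by
    intro h
    have h2 : v k = v ⟨Fintype.card V - 1, Nat.sub_lt (by omega) one_pos⟩ := by
      rw [h, hu]
    have h3 := v.injective h2
    rw [h3] at hklast
    exact lt_irrefl _ hklast
  have hD : 0 < G.dist u (v k) := hconn.pos_dist_of_ne (fun h => hku h.symm)
  by_cases hcase : G.dist u (v k) ≤ (r + 1) / 2 + 2 * i + 1
  · refine ⟨⟨Fintype.card V - 1, Nat.sub_lt (by omega) one_pos⟩, hklast, ?_⟩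
    intro m hm _
    have h1 : G.dist u (v m) ≤ G.dist u (v k) := hmono k m hm
    have h2 : G.dist (v m) (v ⟨Fintype.card V - 1, Nat.sub_lt (by omega) one_pos⟩)
        = G.dist u (v m) := by
      rw [hu, SimpleGraph.dist_comm]
    omega
  · have hcomm : G.dist (v k) u = G.dist u (v k) := SimpleGraph.dist_comm
    obtain ⟨w, hwa, hwu⟩ :=
      StmtAux.interval_point G hconn (v k) u ((r + 1) / 2) (by omega)
    have hvw : v (v.symm w) = w := v.apply_symm_apply w
    have hs₀pos : 1 ≤ (r + 1) / 2 := by omega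
    have hwlt : G.dist u w < G.dist u (v k) := by
      have h5 : G.dist u w = G.dist w u := SimpleGraph.dist_comm
      omega
    refine ⟨v.symm w, ?_, ?_⟩
    · by_contra hle
      have hle' : v.symm w ≤ k := le_of_not_gt hle
      have h6 := hmono (v.symm w) k hle'
      rw [hvw] at h6
      omega
    · intro m hm hmr
      rw [hvw]
      have hxu : G.dist u (v m) ≤ G.dist u (v k) := hmono k m hm
      have hwm : G.dist w (v m) = G.dist (v m) w := SimpleGraph.dist_comm
      have hkm : G.dist (v k) (v m) = G.dist (v m) (v k) := SimpleGraph.dist_comm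
      rcases StmtAux.key G hconn i halpha (v k) u ((r + 1) / 2) w (v m) hwa hwu
        with h | h
      · omega
      · omega
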